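/- arXiv:math/0001174 — 2 statements merged into one kernel-verified Lean document; each statement's English description precedes it below -/
import Mathlib

section
/- For the substitution on the alphabet {0,1,2,3,0̃,1̃,2̃,3̃} given by 0→1̃2, 1→03, 2→0̃3̃, 3→1̃2, 0̃→12̃, 1̃→0̃3̃, 2̃→03, 3̃→12̃, the signed count vector n(W) = (n_0 − n_{0̃}, n_1 − n_{1̃}, n_2 − n_{2̃}, n_3 − n_{3̃}) of the k-th iterate of the word '0' equals R_c^k · (1,0,0,0)^T, where R_c = [[0,1,-1,0],[-1,0,0,-1],[1,0,0,1],[0,1,-1,0]]. -/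
/-!
Counting signed letters turns concatenation into addition, and on each single letter the
substitution acts on signed counts as `R_c`; hence it acts as `R_c` on every word, and `k`
iterations act as `R_c ^ k`.
-/

/-- The substitution 0→1̃2, 1→03, 2→0̃3̃, 3→1̃2, 0̃→12̃, 1̃→0̃3̃, 2̃→03, 3̃→12̃,
with the alphabet {0,1,2,3,0̃,1̃,2̃,3̃} encoded as Fin 8 (tilde of s is s+4). -/
def sigma14 : Fin 8 → List (Fin 8) :=
  ![[5, 2], [0, 3], [4, 7], [5, 2], [1, 6], [4, 7], [0, 3], [1, 6]]

/-- Signed count vector: `n(W)_s = #s − #s̃`. -/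
def signedCount (W : List (Fin 8)) : Fin 4 → ℤ :=
  fun s => (W.count (Fin.castLE (by norm_num) s) : ℤ) - (W.count (s.addNat 4) : ℤ)

theorem List.apply_flatMap_eq {α M : Type*} [AddMonoid M] (f : List α → M)
    (hnil : f [] = 0) (happend : ∀ u v, f (u ++ v) = f u + f v) (τ : α → List α) (L : M →+ M)
    (hτ : ∀ a, f (τ a) = L (f [a])) (W : List α) :
    f (W.flatMap τ) = L (f W) := by
  induction W with
  | nil => simp [hnil]
  | cons a W ih =>
    rw [List.flatMap_cons, happend, ih, hτ, ← map_add, ← happend, List.singleton_append]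

theorem List.apply_iterate_flatMap_eq {α M : Type*} [AddMonoid M] (f : List α → M)
    (hnil : f [] = 0) (happend : ∀ u v, f (u ++ v) = f u + f v) (τ : α → List α) (L : M →+ M)
    (hτ : ∀ a, f (τ a) = L (f [a])) (k : ℕ) (W : List α) :
    f ((fun W => W.flatMap τ)^[k] W) = L^[k] (f W) := by
  induction k generalizing W with
  | zero => rfl
  | succ k ih =>
    rw [Function.iterate_succ_apply, Function.iterate_succ_apply, ih,
      List.apply_flatMap_eq f hnil happend τ L hτ]

theorem Matrix.mulVec_iterate {n R : Type*} [Fintype n] [DecidableEq n] [CommSemiring R]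
    (A : Matrix n n R) (k : ℕ) (v : n → R) : (A.mulVec)^[k] v = (A ^ k).mulVec v := by
  induction k with
  | zero => simp
  | succ k ih => rw [Function.iterate_succ_apply', ih, pow_succ', Matrix.mulVec_mulVec]

def Rc : Matrix (Fin 4) (Fin 4) ℤ := !![0, 1, -1, 0; -1, 0, 0, -1; 1, 0, 0, 1; 0, 1, -1, 0]

theorem signedCount_append (u v : List (Fin 8)) :
    signedCount (u ++ v) = signedCount u + signedCount v := by
  funext s
  simp only [signedCount, List.count_append, Pi.add_apply]
  push_cast
  ring

theorem signedCount_sigma14 : ∀ a, signedCount (sigma14 a) = Rc.mulVec (signedCount [a]) := by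
  decide

theorem signedCount_singleton_zero : signedCount [0] = ![1, 0, 0, 0] := by decide

theorem stmt14 (k : ℕ) :
    signedCount ((fun W : List (Fin 8) => W.flatMap sigma14)^[k] [0])
      = ((!![0, 1, -1, 0; -1, 0, 0, -1; 1, 0, 0, 1; 0, 1, -1, 0] :
          Matrix (Fin 4) (Fin 4) ℤ) ^ k).mulVec ![1, 0, 0, 0] := by
  rw [List.apply_iterate_flatMap_eq signedCount (by decide) signedCount_append sigma14
    (Matrix.mulVecLin Rc).toAddMonoidHom signedCount_sigma14, signedCount_singleton_zero]
  exact Rc.mulVec_iterate k _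
end

section
/- Let R_c = [[0,1,0,1],[-1,0,-1,0],[1,0,0,1],[0,1,-1,0]] (block realification of R' = iI + R for R = [[0,i],[1,0]], the replacement matrix of x² − i). With w^0 = (1,0,0,0)^T and w^k = R_c^k w^0 = (u_1^k, v_1^k, u_2^k, v_2^k), the sequence (u_1^k − i v_1^k)/(u_2^k − i v_2^k) converges to (1+i)/√2 as k → ∞. -/
/-!
Write `a = u₁ - i v₁`, `b = u₂ - i v₂`. Then `R_c` acts on `(a, b)` as `R' = [[i, i], [1, i]]`,
whose eigenvalues are `i ± μ` with `μ² = i`, and `a ± μ b` is multiplied by `i ± μ` at each step.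
For `μ = (1 + i)/√2` the eigenvalue `i + μ` strictly dominates, so `z = (a - μ b)/(a + μ b)`
tends to `0`, and `a / b = μ (1 + z)/(1 - z)` tends to `μ`.
-/

open Filter Topology Complex ComplexConjugate

theorem add_mul_eq_pow_mul_of_sq_eq {K : Type*} [Field K] {a b : ℕ → K} {c d s : K}
    (ha : ∀ k, a (k + 1) = c * a k + d * b k) (hb : ∀ k, b (k + 1) = a k + c * b k)
    (hs : s ^ 2 = d) (k : ℕ) :
    a k + s * b k = (c + s) ^ k * (a 0 + s * b 0) := by
  induction k with
  | zero => simp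
  | succ k ih =>
    rw [ha, hb, pow_succ, mul_right_comm, ← ih, ← hs]
    ring

theorem div_eq_mul_one_add_div_one_sub {K : Type*} [Field K] {a b m : K} (h2 : (2 : K) ≠ 0)
    (hm : m ≠ 0) (hS : a + m * b ≠ 0) :
    a / b = m * (1 + (a - m * b) / (a + m * b)) / (1 - (a - m * b) / (a + m * b)) := by
  have hadd : 1 + (a - m * b) / (a + m * b) = 2 * a / (a + m * b) := by
    field_simp
    ring
  have hsub : 1 - (a - m * b) / (a + m * b) = 2 * m * b / (a + m * b) := by
    field_simp
    ring
  rw [hadd, hsub, mul_div_assoc, div_div_div_cancel_right₀ hS, mul_assoc (2 : K) m b,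
    mul_div_mul_left _ _ h2, ← mul_div_assoc, mul_div_mul_left _ _ hm]

theorem tendsto_div_of_sqrt_recurrence {K : Type*} [NormedField K] {a b : ℕ → K} {c d m : K}
    (ha : ∀ k, a (k + 1) = c * a k + d * b k) (hb : ∀ k, b (k + 1) = a k + c * b k)
    (hm : m ^ 2 = d) (hlt : ‖c - m‖ < ‖c + m‖) (h0 : a 0 + m * b 0 ≠ 0) :
    Tendsto (fun k => a k / b k) atTop (𝓝 m) := by
  have hP : c + m ≠ 0 := norm_pos_iff.mp ((norm_nonneg _).trans_lt hlt)
  have hm0 : m ≠ 0 := by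
    rintro rfl
    simp at hlt
  have h2 : (2 : K) ≠ 0 := by
    intro h
    rw [show c - m = c + m - 2 * m by ring, h, zero_mul, sub_zero] at hlt
    exact hlt.false
  have hS k := add_mul_eq_pow_mul_of_sq_eq ha hb hm k
  have hD k : a k - m * b k = (c - m) ^ k * (a 0 - m * b 0) := by
    simpa [sub_eq_add_neg] using add_mul_eq_pow_mul_of_sq_eq ha hb (s := -m) (by rw [neg_sq, hm]) k
  have hS0 k : a k + m * b k ≠ 0 := by
    rw [hS]
    exact mul_ne_zero (pow_ne_zero _ hP) h0
  have hz : Tendsto (fun k => (a k - m * b k) / (a k + m * b k)) atTop (𝓝 0) := by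
    have hr : ‖(c - m) / (c + m)‖ < 1 := by
      rwa [norm_div, div_lt_one ((norm_nonneg _).trans_lt hlt)]
    have := (tendsto_pow_atTop_nhds_zero_of_norm_lt_one hr).mul_const
      ((a 0 - m * b 0) / (a 0 + m * b 0))
    rw [zero_mul] at this
    refine this.congr fun k => ?_
    rw [hS k, hD k, div_pow]
    field_simp
  have hlim := ((tendsto_const_nhds (x := (1 : K))).add hz).const_mul m |>.div
    ((tendsto_const_nhds (x := (1 : K))).sub hz) (by simp)
  simp only [add_zero, sub_zero, mul_one, div_one] at hlim
  exact hlim.congr fun k => (div_eq_mul_one_add_div_one_sub h2 hm0 (hS0 k)).symm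

theorem sq_one_add_I_div_sqrt_two : ((1 + I) / (Real.sqrt 2 : ℂ)) ^ 2 = I := by
  have h : ((Real.sqrt 2 : ℝ) : ℂ) ^ 2 = 2 := by
    rw [← ofReal_pow, Real.sq_sqrt zero_le_two, ofReal_ofNat]
  rw [div_pow, h]
  ring_nf
  rw [I_sq]
  ring

theorem norm_sub_lt_norm_add_of_re_mul_conj_pos {z w : ℂ} (h : 0 < (z * conj w).re) :
    ‖z - w‖ < ‖z + w‖ := by
  rw [norm_def, norm_def]
  refine Real.sqrt_lt_sqrt (normSq_nonneg _) ?_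
  rw [normSq_sub, normSq_add]
  linarith

theorem norm_I_sub_lt_norm_I_add :
    ‖I - (1 + I) / (Real.sqrt 2 : ℂ)‖ < ‖I + (1 + I) / (Real.sqrt 2 : ℂ)‖ := by
  refine norm_sub_lt_norm_add_of_re_mul_conj_pos ?_
  simp only [map_div₀, conj_ofReal, map_add, map_one, conj_I, ← sub_eq_add_neg]
  rw [show I * ((1 - I) / (Real.sqrt 2 : ℂ)) = (1 + I) / (Real.sqrt 2 : ℂ) by
    linear_combination (-1 / (Real.sqrt 2 : ℂ)) * I_sq, div_ofReal_re]
  simp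

theorem realification_mulVec (v : Fin 4 → ℝ) :
    let Rc : Matrix (Fin 4) (Fin 4) ℝ := !![0, 1, 0, 1; -1, 0, -1, 0; 1, 0, 0, 1; 0, 1, -1, 0]
    let u := Rc.mulVec v
    (u 0 - I * u 1 : ℂ) = I * (v 0 - I * v 1) + I * (v 2 - I * v 3) ∧
      (u 2 - I * u 3 : ℂ) = (v 0 - I * v 1) + I * (v 2 - I * v 3) := by
  simp only [Matrix.mulVec, dotProduct, Fin.sum_univ_four, Matrix.of_apply, Matrix.cons_val',
    Matrix.cons_val_fin_one, Matrix.cons_val_zero, Matrix.cons_val_one, Matrix.cons_val, zero_mul,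
    one_mul, neg_mul, zero_add, add_zero, ofReal_add, ofReal_neg]
  constructor
  · linear_combination ((v 1 : ℂ) + v 3) * I_sq
  · linear_combination (v 3 : ℂ) * I_sq

open Filter in
theorem stmt16 :
    let Rc : Matrix (Fin 4) (Fin 4) ℝ :=
      !![0, 1, 0, 1; -1, 0, -1, 0; 1, 0, 0, 1; 0, 1, -1, 0]
    let w : ℕ → Fin 4 → ℝ := fun k => (Rc ^ k).mulVec ![1, 0, 0, 0]
    Tendsto (fun k =>
        ((w k 0 : ℂ) - Complex.I * (w k 1 : ℂ)) /
        ((w k 2 : ℂ) - Complex.I * (w k 3 : ℂ)))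
      atTop (nhds ((1 + Complex.I) / Real.sqrt 2)) := by
  intro Rc w
  have hw k : w (k + 1) = Rc.mulVec (w k) := by
    simp only [w, pow_succ', Matrix.mulVec_mulVec]
  refine tendsto_div_of_sqrt_recurrence (c := I) (d := I) (fun k => ?_) (fun k => ?_)
    sq_one_add_I_div_sqrt_two norm_I_sub_lt_norm_I_add (by simp [w])
  · exact hw k ▸ (realification_mulVec (w k)).1
  · exact hw k ▸ (realification_mulVec (w k)).2
end
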